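/- arXiv:2004.11505 — 2 statements merged into one kernel-verified Lean document; each statement's English description precedes it below -/
import Mathlib

section
/- Let n ≥ 1, let λ be symmetric nonnegative real edge weights on the complete graph with vertex set {1,…,n}, let x_1,…,x_n be complex numbers with Re(x_i) > 0 for every i, and fix a vertex i. Then μ_{G∖i} ≠ 0 and Re( μ_G / μ_{G∖i} ) > 0, where μ_G is the matching polynomial of the complete graph on {1,…,n} and μ_{G∖i} is the matching polynomial of the induced graph on {1,…,n}∖{i}. -/
open Finset Classical

/-- A matching of the complete graph induced on the vertex set `S ⊆ Fin n`,
represented as a finset of ordered pairs `(j, k)` with `j < k` (each such pair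
encoding the unordered edge `{j, k}`), no two of which share a vertex. -/
def IsMatching (n : ℕ) (S : Finset (Fin n)) (M : Finset (Fin n × Fin n)) : Prop :=
  (∀ p ∈ M, p.1 < p.2 ∧ p.1 ∈ S ∧ p.2 ∈ S) ∧
  ∀ p ∈ M, ∀ q ∈ M, p ≠ q → p.1 ≠ q.1 ∧ p.1 ≠ q.2 ∧ p.2 ≠ q.1 ∧ p.2 ≠ q.2

/-- The matching polynomial of the complete graph induced on `S ⊆ Fin n`, with
edge weights `lam` and vertex variables `x`:
`μ_S = Σ_{M matching of S} (Π_{i ∈ S not covered by M} x i) · (Π_{{j,k} ∈ M} lam j k)`. -/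
noncomputable def mu (n : ℕ) (lam : Fin n → Fin n → ℝ) (x : Fin n → ℂ)
    (S : Finset (Fin n)) : ℂ :=
  ∑ M ∈ univ.filter (fun M : Finset (Fin n × Fin n) => IsMatching n S M),
    (∏ v ∈ S.filter (fun v => ∀ p ∈ M, v ≠ p.1 ∧ v ≠ p.2), x v) *
    ∏ p ∈ M, (lam p.1 p.2 : ℂ)

/-- The ordered pair encoding the edge `{i, j}`. -/
def ep {n : ℕ} (i j : Fin n) : Fin n × Fin n := if i < j then (i, j) else (j, i)

lemma ep_spec {n : ℕ} {i j : Fin n} (h : i ≠ j) :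
    ((ep i j).1 = i ∧ (ep i j).2 = j) ∨ ((ep i j).1 = j ∧ (ep i j).2 = i) := by
  unfold ep; split <;> simp

lemma ep_lt {n : ℕ} {i j : Fin n} (h : i ≠ j) : (ep i j).1 < (ep i j).2 := by
  unfold ep; split
  · assumption
  · exact lt_of_le_of_ne (not_lt.mp (by assumption)) h.symm

lemma ep_inj {n : ℕ} {i j j' : Fin n} (hij : i ≠ j) (hij' : i ≠ j')
    (h : ep i j = ep i j') : j = j' := by
  rcases ep_spec hij with ⟨a1, a2⟩ | ⟨a1, a2⟩ <;>
    rcases ep_spec hij' with ⟨b1, b2⟩ | ⟨b1, b2⟩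
  · exact a2.symm.trans (h ▸ b2)
  · exact absurd (a1.symm.trans (h ▸ b1)) hij'
  · exact absurd (a1.symm.trans (h ▸ b1)) hij.symm
  · exact a1.symm.trans (h ▸ b1)

lemma mu_empty (n : ℕ) (lam : Fin n → Fin n → ℝ) (x : Fin n → ℂ) :
    mu n lam x ∅ = 1 := by
  unfold mu
  have h : (univ.filter (fun M : Finset (Fin n × Fin n) => IsMatching n ∅ M)) = {∅} := by
    ext M
    simp only [mem_filter, mem_univ, true_and, mem_singleton]
    constructor
    · rintro ⟨h1, -⟩
      refine Finset.eq_empty_of_forall_notMem fun p hp => ?_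
      exact absurd (h1 p hp).2.1 (Finset.notMem_empty _)
    · rintro rfl
      exact ⟨fun p hp => absurd hp (Finset.notMem_empty _),
        fun p hp => absurd hp (Finset.notMem_empty _)⟩
  rw [h]
  simp

lemma mu_rec (n : ℕ) (lam : Fin n → Fin n → ℝ) (hsymm : ∀ j k, lam j k = lam k j)
    (x : Fin n → ℂ) (S : Finset (Fin n)) (i : Fin n) (hi : i ∈ S) :
    mu n lam x S = x i * mu n lam x (S \ {i}) +
      ∑ j ∈ (S \ {i}), (lam i j : ℂ) * mu n lam x ((S \ {i}) \ {j}) := by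
  unfold mu
  rw [← Finset.sum_filter_add_sum_filter_not
        (univ.filter (fun M : Finset (Fin n × Fin n) => IsMatching n S M))
        (fun M => ∀ p ∈ M, i ≠ p.1 ∧ i ≠ p.2)]
  congr 1
  · -- matchings not covering i
    have hset : (univ.filter (fun M : Finset (Fin n × Fin n) => IsMatching n S M)).filter
        (fun M => ∀ p ∈ M, i ≠ p.1 ∧ i ≠ p.2)
        = univ.filter (fun M : Finset (Fin n × Fin n) => IsMatching n (S \ {i}) M) := by
      ext M
      simp only [mem_filter, mem_univ, true_and]
      constructor
      · rintro ⟨⟨h1, h2⟩, hfree⟩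
        refine ⟨fun p hp => ?_, h2⟩
        obtain ⟨hlt, hp1, hp2⟩ := h1 p hp
        obtain ⟨hi1, hi2⟩ := hfree p hp
        exact ⟨hlt, Finset.mem_sdiff.mpr ⟨hp1, by simp [hi1.symm]⟩,
          Finset.mem_sdiff.mpr ⟨hp2, by simp [hi2.symm]⟩⟩
      · rintro ⟨h1, h2⟩
        refine ⟨⟨fun p hp => ?_, h2⟩, fun p hp => ?_⟩
        · obtain ⟨hlt, hp1, hp2⟩ := h1 p hp
          exact ⟨hlt, (Finset.mem_sdiff.mp hp1).1, (Finset.mem_sdiff.mp hp2).1⟩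
        · obtain ⟨hlt, hp1, hp2⟩ := h1 p hp
          have := (Finset.mem_sdiff.mp hp1).2
          have := (Finset.mem_sdiff.mp hp2).2
          constructor
          · intro hh; exact (Finset.mem_sdiff.mp hp1).2 (by simp [hh.symm])
          · intro hh; exact (Finset.mem_sdiff.mp hp2).2 (by simp [hh.symm])
    rw [hset, Finset.mul_sum]
    refine Finset.sum_congr rfl fun M hM => ?_
    simp only [mem_filter, mem_univ, true_and] at hM
    have hfilter : S.filter (fun v => ∀ p ∈ M, v ≠ p.1 ∧ v ≠ p.2)
        = insert i ((S \ {i}).filter (fun v => ∀ p ∈ M, v ≠ p.1 ∧ v ≠ p.2)) := by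
      ext v
      simp only [mem_filter, Finset.mem_insert, Finset.mem_sdiff, Finset.mem_singleton]
      constructor
      · rintro ⟨hv, hunc⟩
        by_cases hvi : v = i
        · exact Or.inl hvi
        · exact Or.inr ⟨⟨hv, hvi⟩, hunc⟩
      · rintro (rfl | ⟨⟨hv, -⟩, hunc⟩)
        · refine ⟨hi, fun p hp => ?_⟩
          obtain ⟨hlt, hp1, hp2⟩ := hM.1 p hp
          exact ⟨fun hh => (Finset.mem_sdiff.mp hp1).2 (by simp [hh.symm]),
            fun hh => (Finset.mem_sdiff.mp hp2).2 (by simp [hh.symm])⟩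
        · exact ⟨hv, hunc⟩
    rw [hfilter, Finset.prod_insert (by simp), mul_assoc]
  · -- matchings covering i
    have hcover : (univ.filter (fun M : Finset (Fin n × Fin n) => IsMatching n S M)).filter
        (fun M => ¬ ∀ p ∈ M, i ≠ p.1 ∧ i ≠ p.2)
        = (S \ {i}).biUnion (fun j =>
            (univ.filter (fun M : Finset (Fin n × Fin n) => IsMatching n S M)).filter
              (fun M => ep i j ∈ M)) := by
      ext M
      simp only [mem_filter, mem_univ, true_and, Finset.mem_biUnion, Finset.mem_sdiff,
        Finset.mem_singleton]
      constructor
      · rintro ⟨hMm, hcov⟩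
        push_neg at hcov
        obtain ⟨p, hp, hcov⟩ := hcov
        obtain ⟨hlt, hp1, hp2⟩ := hMm.1 p hp
        by_cases hip : i = p.1
        · refine ⟨p.2, ⟨hp2, fun hh => absurd hlt (by simp [← hip, hh])⟩, hMm, ?_⟩
          have hee : ep i p.2 = p := by
            unfold ep
            rw [if_pos (hip ▸ hlt), hip]
          rwa [hee]
        · have hip2 : i = p.2 := hcov hip
          refine ⟨p.1, ⟨hp1, fun hh => absurd hlt (by simp [← hip2, hh])⟩, hMm, ?_⟩
          have hee : ep i p.1 = p := by
            unfold ep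
            rw [if_neg (by simpa [← hip2] using asymm hlt), hip2]
          rwa [hee]
      · rintro ⟨j, ⟨hjS, hji⟩, hMm, hep⟩
        refine ⟨hMm, ?_⟩
        intro hfree
        have hne : i ≠ j := fun hh => hji hh.symm
        rcases ep_spec hne with ⟨h1, h2⟩ | ⟨h1, h2⟩
        · exact (hfree _ hep).1 h1.symm
        · exact (hfree _ hep).2 h2.symm
    have hdisj : ∀ j1 ∈ S \ {i}, ∀ j2 ∈ S \ {i}, j1 ≠ j2 →
        Disjoint ((univ.filter (fun M : Finset (Fin n × Fin n) => IsMatching n S M)).filter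
              (fun M => ep i j1 ∈ M))
          ((univ.filter (fun M : Finset (Fin n × Fin n) => IsMatching n S M)).filter
              (fun M => ep i j2 ∈ M)) := by
      intro j1 hj1 j2 hj2 hne
      rw [Finset.disjoint_left]
      intro M hM1 hM2
      simp only [mem_filter, mem_univ, true_and] at hM1 hM2
      have hij1 : i ≠ j1 := fun hh => (Finset.mem_sdiff.mp hj1).2 (by simp [hh.symm])
      have hij2 : i ≠ j2 := fun hh => (Finset.mem_sdiff.mp hj2).2 (by simp [hh.symm])
      have hpq : ep i j1 ≠ ep i j2 := by
        intro hh
        apply hne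
        exact ep_inj hij1 hij2 hh
      have := hM1.1.2 _ hM1.2 _ hM2.2 hpq
      rcases ep_spec hij1 with ⟨a1, a2⟩ | ⟨a1, a2⟩ <;>
        rcases ep_spec hij2 with ⟨b1, b2⟩ | ⟨b1, b2⟩
      · exact this.1 (a1.trans b1.symm)
      · exact this.2.1 (a1.trans b2.symm)
      · exact this.2.2.1 (a2.trans b1.symm)
      · exact this.2.2.2 (a2.trans b2.symm)
    rw [hcover, Finset.sum_biUnion hdisj]
    refine Finset.sum_congr rfl fun j hj => ?_
    have hjS : j ∈ S := (Finset.mem_sdiff.mp hj).1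
    have hij : i ≠ j := fun hh => (Finset.mem_sdiff.mp hj).2 (by simp [hh.symm])
    have hepv : ∀ v : Fin n, (v = (ep i j).1 ∨ v = (ep i j).2) ↔ (v = i ∨ v = j) := by
      intro v
      rcases ep_spec hij with ⟨h1, h2⟩ | ⟨h1, h2⟩ <;> rw [h1, h2] <;> tauto
    rw [Finset.mul_sum]
    refine Finset.sum_nbij' (fun M => M.erase (ep i j)) (fun M => insert (ep i j) M)
      ?_ ?_ ?_ ?_ ?_
    · -- maps to
      intro M hM
      simp only [mem_filter, mem_univ, true_and] at hM ⊢
      obtain ⟨⟨h1, h2⟩, hep⟩ := hM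
      constructor
      · intro p hp
        have hpM := Finset.mem_of_mem_erase hp
        have hpne := Finset.ne_of_mem_erase hp
        obtain ⟨hlt, hp1, hp2⟩ := h1 p hpM
        have hdis := h2 p hpM _ hep hpne
        refine ⟨hlt, ?_, ?_⟩ <;>
          simp only [Finset.mem_sdiff, Finset.mem_singleton]
        · refine ⟨⟨hp1, ?_⟩, ?_⟩ <;> intro hh <;>
            rcases ep_spec hij with ⟨a1, a2⟩ | ⟨a1, a2⟩
          · exact hdis.1 (hh.trans a1.symm)
          · exact hdis.2.1 (hh.trans a2.symm)
          · exact hdis.2.1 (hh.trans a2.symm)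
          · exact hdis.1 (hh.trans a1.symm)
        · refine ⟨⟨hp2, ?_⟩, ?_⟩ <;> intro hh <;>
            rcases ep_spec hij with ⟨a1, a2⟩ | ⟨a1, a2⟩
          · exact hdis.2.2.1 (hh.trans a1.symm)
          · exact hdis.2.2.2 (hh.trans a2.symm)
          · exact hdis.2.2.2 (hh.trans a2.symm)
          · exact hdis.2.2.1 (hh.trans a1.symm)
      · intro p hp q hq hpq
        exact h2 p (Finset.mem_of_mem_erase hp) q (Finset.mem_of_mem_erase hq) hpq
    · -- inverse maps to
      intro M hM
      simp only [mem_filter, mem_univ, true_and] at hM ⊢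
      obtain ⟨h1, h2⟩ := hM
      have hmemS : ∀ p ∈ M, p.1 ≠ i ∧ p.1 ≠ j ∧ p.2 ≠ i ∧ p.2 ≠ j := by
        intro p hp
        obtain ⟨-, hp1, hp2⟩ := h1 p hp
        simp only [Finset.mem_sdiff, Finset.mem_singleton] at hp1 hp2
        exact ⟨hp1.1.2, hp1.2, hp2.1.2, hp2.2⟩
      constructor
      · constructor
        · intro p hp
          rcases Finset.mem_insert.mp hp with rfl | hpM
          · refine ⟨ep_lt hij, ?_, ?_⟩
            · rcases ep_spec hij with ⟨a1, -⟩ | ⟨a1, -⟩ <;> rw [a1]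
              · exact hi
              · exact hjS
            · rcases ep_spec hij with ⟨-, a2⟩ | ⟨-, a2⟩ <;> rw [a2]
              · exact hjS
              · exact hi
          · obtain ⟨hlt, hp1, hp2⟩ := h1 p hpM
            simp only [Finset.mem_sdiff, Finset.mem_singleton] at hp1 hp2
            exact ⟨hlt, hp1.1.1, hp2.1.1⟩
        · intro p hp q hq hpq
          rcases Finset.mem_insert.mp hp with rfl | hpM
          · rcases Finset.mem_insert.mp hq with heq | hqM
            · exact absurd heq.symm hpq
            · obtain ⟨c1, c2, c3, c4⟩ := hmemS q hqM
              rcases ep_spec hij with ⟨a1, a2⟩ | ⟨a1, a2⟩ <;> rw [a1, a2]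
              · exact ⟨c1.symm, c3.symm, c2.symm, c4.symm⟩
              · exact ⟨c2.symm, c4.symm, c1.symm, c3.symm⟩
          · rcases Finset.mem_insert.mp hq with heq | hqM
            · obtain ⟨c1, c2, c3, c4⟩ := hmemS p hpM
              subst heq
              rcases ep_spec hij with ⟨a1, a2⟩ | ⟨a1, a2⟩ <;> rw [a1, a2]
              · exact ⟨c1, c2, c3, c4⟩
              · exact ⟨c2, c1, c4, c3⟩
            · exact h2 p hpM q hqM hpq
      · exact Finset.mem_insert_self _ _
    · -- left inverse
      intro M hM
      simp only [mem_filter, mem_univ, true_and] at hM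
      exact Finset.insert_erase hM.2
    · -- right inverse
      intro M hM
      simp only [mem_filter, mem_univ, true_and] at hM
      apply Finset.erase_insert
      intro hep
      obtain ⟨-, hp1, -⟩ := hM.1 _ hep
      simp only [Finset.mem_sdiff, Finset.mem_singleton] at hp1
      rcases ep_spec hij with ⟨a1, -⟩ | ⟨a1, -⟩
      · exact hp1.1.2 a1
      · exact hp1.2 a1
    · -- term equality
      intro M hM
      simp only [mem_filter, mem_univ, true_and] at hM
      obtain ⟨⟨h1, h2⟩, hep⟩ := hM
      have hlam : ∏ p ∈ M, (lam p.1 p.2 : ℂ)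
          = (lam i j : ℂ) * ∏ p ∈ M.erase (ep i j), (lam p.1 p.2 : ℂ) := by
        rw [← Finset.mul_prod_erase M _ hep]
        congr 2
        rcases ep_spec hij with ⟨a1, a2⟩ | ⟨a1, a2⟩ <;> rw [a1, a2]
        exact hsymm j i
      have hvert : S.filter (fun v => ∀ p ∈ M, v ≠ p.1 ∧ v ≠ p.2)
          = ((S \ {i}) \ {j}).filter
              (fun v => ∀ p ∈ M.erase (ep i j), v ≠ p.1 ∧ v ≠ p.2) := by
        ext v
        simp only [mem_filter, Finset.mem_sdiff, Finset.mem_singleton]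
        constructor
        · rintro ⟨hv, hunc⟩
          have hnotij : ¬ (v = i ∨ v = j) := by
            rw [← hepv v]
            obtain ⟨u1, u2⟩ := hunc _ hep
            rintro (hh | hh) <;> [exact u1 hh; exact u2 hh]
          push_neg at hnotij
          exact ⟨⟨⟨hv, hnotij.1⟩, hnotij.2⟩,
            fun p hp => hunc p (Finset.mem_of_mem_erase hp)⟩
        · rintro ⟨⟨⟨hv, hvi⟩, hvj⟩, hunc⟩
          refine ⟨hv, fun p hp => ?_⟩
          by_cases hpe : p = ep i j
          · subst hpe
            constructor <;> intro hh <;> exact absurd ((hepv v).mp (by tauto)) (by tauto)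
          · exact hunc p (Finset.mem_erase.mpr ⟨hpe, hp⟩)
      rw [hvert, hlam]
      ring

lemma re_pos_ne_zero {z : ℂ} (h : 0 < z.re) : z ≠ 0 := by
  intro hh; rw [hh] at h; simp at h

lemma re_inv_pos {z : ℂ} (h : 0 < z.re) : 0 < (z⁻¹).re := by
  rw [Complex.inv_re]
  exact div_pos h (Complex.normSq_pos.mpr (re_pos_ne_zero h))

lemma mu_key (n : ℕ) (lam : Fin n → Fin n → ℝ)
    (hsymm : ∀ j k, lam j k = lam k j) (hnonneg : ∀ j k, 0 ≤ lam j k)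
    (x : Fin n → ℂ) (hx : ∀ i, 0 < (x i).re) :
    ∀ S : Finset (Fin n),
      (∀ i ∈ S, mu n lam x (S \ {i}) ≠ 0 ∧
        0 < (mu n lam x S / mu n lam x (S \ {i})).re) ∧ mu n lam x S ≠ 0 := by
  intro S
  induction S using Finset.strongInduction with
  | _ S IH =>
    have main : ∀ i ∈ S, mu n lam x (S \ {i}) ≠ 0 ∧
        0 < (mu n lam x S / mu n lam x (S \ {i})).re := by
      intro i hi
      have hsub : S \ {i} ⊂ S :=
        Finset.sdiff_ssubset (Finset.singleton_subset_iff.mpr hi) (Finset.singleton_nonempty i)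
      obtain ⟨IH1, IH2⟩ := IH (S \ {i}) hsub
      refine ⟨IH2, ?_⟩
      have hrec := mu_rec n lam hsymm x S i hi
      have hq : mu n lam x S / mu n lam x (S \ {i})
          = x i + ∑ j ∈ (S \ {i}),
              (lam i j : ℂ) * (mu n lam x ((S \ {i}) \ {j}) / mu n lam x (S \ {i})) := by
        rw [hrec, add_div, mul_div_assoc, div_self IH2, mul_one, Finset.sum_div]
        congr 1
        exact Finset.sum_congr rfl fun j _ => (mul_div_assoc _ _ _)
      rw [hq, Complex.add_re]
      have hsum : 0 ≤ (∑ j ∈ (S \ {i}),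
          (lam i j : ℂ) * (mu n lam x ((S \ {i}) \ {j}) / mu n lam x (S \ {i}))).re := by
        rw [Complex.re_sum]
        refine Finset.sum_nonneg fun j hj => ?_
        rw [Complex.re_ofReal_mul]
        refine mul_nonneg (hnonneg i j) (le_of_lt ?_)
        obtain ⟨hj1, hj2⟩ := IH1 j hj
        have : mu n lam x ((S \ {i}) \ {j}) / mu n lam x (S \ {i})
            = (mu n lam x (S \ {i}) / mu n lam x ((S \ {i}) \ {j}))⁻¹ := by
          rw [inv_div]
        rw [this]
        exact re_inv_pos hj2
      linarith [hx i]
    refine ⟨main, ?_⟩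
    rcases Finset.eq_empty_or_nonempty S with rfl | ⟨i, hi⟩
    · rw [mu_empty]; exact one_ne_zero
    · obtain ⟨h1, h2⟩ := main i hi
      intro hzero
      rw [hzero, zero_div] at h2
      simp at h2

/-- Half-plane inductive invariant: if `Re (x i) > 0` for every `i`, then for
every vertex `i` the denominator `μ_{G∖i}` of the graph continued fraction is
nonzero and `Re (μ_G / μ_{G∖i}) > 0`. -/
theorem graph_cf_half_plane (n : ℕ) (hn : 1 ≤ n)
    (lam : Fin n → Fin n → ℝ)
    (hsymm : ∀ j k, lam j k = lam k j)
    (hnonneg : ∀ j k, 0 ≤ lam j k)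
    (hdiag : ∀ j, lam j j = 0)
    (x : Fin n → ℂ) (hx : ∀ i, 0 < (x i).re) (i : Fin n) :
    mu n lam x (Finset.univ \ {i}) ≠ 0 ∧
      0 < (mu n lam x Finset.univ / mu n lam x (Finset.univ \ {i})).re := by
  exact (mu_key n lam hsymm hnonneg x hx Finset.univ).1 i (Finset.mem_univ i)
end

section
/- Let G be a finite simple graph with vertex set V, with nonnegative real edge weights λ_{uv} > 0 on its edges and complex vertex variables x_v, and fix a root vertex i ∈ V. Let T = T^i_G be the rooted tree of paths of G at i: its vertices are the paths of G starting at i (including the trivial path at i), two paths being adjacent in T exactly when one is obtained from the other by appending one edge; the vertex variable of a path P in T is x_{end(P)} where end(P) is the last vertex of P, and the edge weight between a path P and its one-edge extension P·{u,v} is λ_{uv}. Then μ(G) · μ(T ∖ r) = μ(T) · μ(G ∖ i), where r is the root of T (the trivial path at i), μ denotes the matching polynomial, and G ∖ i (resp. T ∖ r) denotes the graph obtained by deleting the vertex i (resp. r). Equivalently, whenever the denominators are nonzero, μ(G)/μ(G∖i) = μ(T)/μ(T∖r). -/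
/-!
Both sides obey the same vertex recursion. Expanding the matching polynomial at `i` gives
`μ(G[S]) = x_i μ(G[S∖i]) + Σ_{j ∼ i} λ_{ij} μ(G[S∖{i,j}])`. Deleting the root of the tree of paths
leaves the branches `T_j` of paths whose second vertex is `j`; they are pairwise disjoint and
non-adjacent, so μ is multiplicative over them, and prepending the edge `ij` identifies `T_j` with
the tree of paths of `G[S∖i]` rooted at `j`. Expanding the tree at its root and applying the
identity to `G[S∖i]` at every neighbour `j` then closes a strong induction on `S`.
-/

open Finset Classical

def IsGMatching {V : Type} [Fintype V] [DecidableEq V] (G : SimpleGraph V)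
    (S : Finset V) (M : Finset (Sym2 V)) : Prop :=
  (∀ e ∈ M, e ∈ G.edgeSet ∧ ∀ v ∈ e, v ∈ S) ∧
  ∀ e ∈ M, ∀ f ∈ M, e ≠ f → ∀ v ∈ e, v ∉ f

/-- `muG G w x S` is the matching polynomial of the induced subgraph `G[S]`; in particular
`μ(G ∖ i)` is `muG G w x (univ \ {i})`. -/
noncomputable def muG {V : Type} [Fintype V] [DecidableEq V] (G : SimpleGraph V)
    (w : Sym2 V → ℝ) (x : V → ℂ) (S : Finset V) : ℂ :=
  ∑ M ∈ univ.filter (fun M : Finset (Sym2 V) => IsGMatching G S M),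
    (∏ v ∈ S.filter (fun v => ∀ e ∈ M, v ∉ e), x v) * ∏ e ∈ M, (w e : ℂ)

def treeOfPaths {V : Type} (G : SimpleGraph V) (i : V) :
    SimpleGraph (Σ v : V, G.Path i v) :=
  SimpleGraph.fromRel (fun P Q =>
    ∃ h : G.Adj P.1 Q.1, Q.2.val = (P.2.val).concat h)

open SimpleGraph

section Recurrence

variable {V : Type} [Fintype V] [DecidableEq V]
variable (G : SimpleGraph V) (w : Sym2 V → ℝ) (x : V → ℂ)

noncomputable def matchings (S : Finset V) : Finset (Finset (Sym2 V)) :=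
  univ.filter (IsGMatching G S)

lemma muG_eq_sum_matchings (S : Finset V) :
    muG G w x S = ∑ M ∈ matchings G S,
      (∏ v ∈ S.filter (fun v => ∀ e ∈ M, v ∉ e), x v) * ∏ e ∈ M, (w e : ℂ) :=
  rfl

variable {G}

lemma isGMatching_empty_iff {M : Finset (Sym2 V)} : IsGMatching G ∅ M ↔ M = ∅ := by
  refine ⟨fun h => eq_empty_of_forall_notMem fun e he => ?_, by rintro rfl; simp [IsGMatching]⟩
  induction e using Sym2.ind with
  | _ a b => simpa using (h.1 _ he).2 a (Sym2.mem_mk_left a b)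

lemma muG_empty : muG G w x ∅ = 1 := by
  have : matchings G ∅ = {∅} := by ext M; simp [matchings, isGMatching_empty_iff]
  simp [muG_eq_sum_matchings, this]

lemma isGMatching_erase_iff {S : Finset V} {i : V} {M : Finset (Sym2 V)} :
    IsGMatching G (S.erase i) M ↔ IsGMatching G S M ∧ ∀ e ∈ M, i ∉ e := by
  simp only [IsGMatching, mem_erase]
  grind

lemma IsGMatching.mk_notMem {S : Finset V} {M : Finset (Sym2 V)} (hM : IsGMatching G S M)
    {i : V} (hi : i ∉ S) (j : V) : s(i, j) ∉ M :=
  fun h => hi ((hM.1 _ h).2 i (Sym2.mem_mk_left i j))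

lemma isGMatching_insert_iff {S : Finset V} {i j : V} {M : Finset (Sym2 V)} (hM : s(i, j) ∉ M) :
    IsGMatching G S (insert s(i, j) M) ↔
      G.Adj i j ∧ i ∈ S ∧ j ∈ S ∧ IsGMatching G ((S.erase i).erase j) M := by
  simp only [IsGMatching, mem_insert, forall_eq_or_imp, mem_edgeSet, Sym2.mem_iff, mem_erase]
  grind

lemma filter_uncovered_insert (S : Finset V) (i j : V) (M : Finset (Sym2 V)) :
    S.filter (fun v => ∀ e ∈ insert s(i, j) M, v ∉ e) =
      ((S.erase i).erase j).filter (fun v => ∀ e ∈ M, v ∉ e) := by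
  ext v
  simp only [mem_filter, forall_mem_insert, mem_erase, Sym2.mem_iff]
  tauto

variable (G) [DecidableRel G.Adj]

lemma matchings_covering_eq_biUnion {S : Finset V} {i : V} (hi : i ∈ S) :
    (matchings G S).filter (fun M => ¬∀ e ∈ M, i ∉ e) =
      ((S.erase i).filter (G.Adj i)).biUnion
        fun j => (matchings G ((S.erase i).erase j)).image (insert s(i, j)) := by
  ext M
  simp only [matchings, mem_filter, mem_biUnion, mem_image, mem_univ, true_and, mem_erase]
  constructor
  · rintro ⟨hM, hcov⟩
    push Not at hcov
    obtain ⟨e, he, hie⟩ := hcov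
    obtain ⟨j, rfl⟩ := Sym2.mem_iff_exists.1 hie
    rw [← insert_erase he, isGMatching_insert_iff (notMem_erase _ _)] at hM
    obtain ⟨hadj, -, hj, hM⟩ := hM
    exact ⟨_, ⟨⟨hadj.ne', hj⟩, hadj⟩, _, hM, insert_erase he⟩
  · rintro ⟨j, ⟨⟨-, hj⟩, hadj⟩, M, hM, rfl⟩
    refine ⟨(isGMatching_insert_iff (hM.mk_notMem (by simp) j)).2 ⟨hadj, hi, hj, hM⟩, ?_⟩
    push Not
    exact ⟨_, mem_insert_self _ _, Sym2.mem_mk_left i j⟩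

theorem muG_recurrence {S : Finset V} {i : V} (hi : i ∈ S) :
    muG G w x S = x i * muG G w x (S.erase i) +
      ∑ j ∈ (S.erase i).filter (G.Adj i), (w s(i, j) : ℂ) * muG G w x ((S.erase i).erase j) := by
  rw [muG_eq_sum_matchings, ← sum_filter_add_sum_filter_not _ (fun M => ∀ e ∈ M, i ∉ e),
    matchings_covering_eq_biUnion G hi, sum_biUnion]
  · congr 1
    · rw [muG_eq_sum_matchings, mul_sum]
      refine sum_congr (by ext M; simp [matchings, isGMatching_erase_iff]) fun M hM => ?_
      have hiM : i ∈ S.filter (fun v => ∀ e ∈ M, v ∉ e) :=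
        mem_filter.2 ⟨hi, (isGMatching_erase_iff.1 (mem_filter.1 hM).2).2⟩
      rw [filter_erase, ← mul_prod_erase _ _ hiM, mul_assoc]
    · refine sum_congr rfl fun j hj => ?_
      have hnot : ∀ M ∈ matchings G ((S.erase i).erase j), s(i, j) ∉ M :=
        fun M hM => (mem_filter.1 hM).2.mk_notMem (by simp) j
      rw [sum_image fun M hM M' hM' h => by
          rw [← erase_insert (hnot M hM), h, erase_insert (hnot M' hM')],
        muG_eq_sum_matchings, mul_sum]
      refine sum_congr rfl fun M hM => ?_
      rw [filter_uncovered_insert, prod_insert (hnot M hM)]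
      ring
  · intro j hj k hk hjk
    simp only [Function.onFun, Finset.disjoint_left, mem_image]
    rintro _ ⟨M, hM, rfl⟩ ⟨M', -, h⟩
    rcases mem_insert.1 (h ▸ mem_insert_self _ _ : s(i, k) ∈ insert s(i, j) M) with h | h
    · exact hjk (Sym2.congr_right.1 h).symm
    · exact (mem_filter.1 hM).2.mk_notMem (by simp) k h

end Recurrence

lemma Finset.image_erase_of_injOn {α β : Type*} [DecidableEq α] [DecidableEq β] {f : α → β}
    {s : Finset α} (hf : Set.InjOn f s) {a : α} (ha : a ∈ s) :
    (s.image f).erase (f a) = (s.erase a).image f := by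
  rw [erase_eq, erase_eq, image_sdiff_of_injOn hf (by simpa using ha), image_singleton]

section Factorization

variable {V : Type} [Fintype V] [DecidableEq V]
variable (G : SimpleGraph V) (w : Sym2 V → ℝ) (x : V → ℂ)

theorem muG_union {A B : Finset V} (hAB : Disjoint A B) (hsep : ∀ a ∈ A, ∀ b ∈ B, ¬G.Adj a b) :
    muG G w x (A ∪ B) = muG G w x A * muG G w x B := by
  induction A using Finset.strongInduction with
  | H A ih =>
  rcases A.eq_empty_or_nonempty with rfl | ⟨i, hi⟩
  · simp [muG_empty]
  have hiB : i ∉ B := disjoint_left.1 hAB hi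
  have ih' : ∀ A' ⊆ A.erase i, muG G w x (A' ∪ B) = muG G w x A' * muG G w x B :=
    fun A' hA' => ih A' (hA'.trans_ssubset (erase_ssubset hi))
      (disjoint_of_subset_left (hA'.trans (erase_subset i A)) hAB)
      fun a ha => hsep a (mem_of_mem_erase (hA' ha))
  have hnbr : ((A ∪ B).erase i).filter (G.Adj i) = (A.erase i).filter (G.Adj i) := by
    ext j
    simp only [mem_filter, mem_erase, mem_union]
    have := hsep i hi j
    tauto
  rw [muG_recurrence G w x (mem_union_left B hi), muG_recurrence G w x hi, hnbr,
    erase_union_distrib, erase_eq_of_notMem hiB, ih' _ subset_rfl, add_mul, sum_mul, mul_assoc]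
  refine congrArg _ (sum_congr rfl fun j hj => ?_)
  have hjB : j ∉ B := disjoint_left.1 hAB (mem_of_mem_erase (mem_filter.1 hj).1)
  rw [erase_union_distrib, erase_eq_of_notMem hjB, ih' _ (erase_subset _ _), mul_assoc]

theorem muG_biUnion {ι : Type*} (t : Finset ι) (s : ι → Finset V)
    (hdisj : (t : Set ι).PairwiseDisjoint s)
    (hsep : ∀ j ∈ t, ∀ k ∈ t, j ≠ k → ∀ a ∈ s j, ∀ b ∈ s k, ¬G.Adj a b) :
    muG G w x (t.biUnion s) = ∏ j ∈ t, muG G w x (s j) := by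
  induction t using Finset.induction_on with
  | empty => simp [muG_empty]
  | insert j t hj ih =>
    rw [biUnion_insert, prod_insert hj, muG_union,
      ih (hdisj.subset (subset_insert j t))
        fun a ha b hb => hsep a (mem_insert_of_mem ha) b (mem_insert_of_mem hb)]
    · exact (disjoint_biUnion_right _ _ _).2 fun k hk =>
        hdisj (mem_insert_self j t) (mem_insert_of_mem hk) (ne_of_mem_of_not_mem hk hj).symm
    · intro a ha b hb
      obtain ⟨k, hk, hb⟩ := mem_biUnion.1 hb
      exact hsep j (mem_insert_self j t) k (mem_insert_of_mem hk)
        (ne_of_mem_of_not_mem hk hj).symm a ha b hb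

end Factorization

theorem muG_image {V V' : Type} [Fintype V] [DecidableEq V] [Fintype V'] [DecidableEq V']
    {G : SimpleGraph V} {G' : SimpleGraph V'} {w : Sym2 V → ℝ} {w' : Sym2 V' → ℝ}
    {x : V → ℂ} {x' : V' → ℂ} {f : V → V'} {S : Finset V}
    (hf : Set.InjOn f S) (hadj : ∀ u ∈ S, ∀ v ∈ S, G'.Adj (f u) (f v) ↔ G.Adj u v)
    (hw : ∀ u ∈ S, ∀ v ∈ S, G.Adj u v → w' s(f u, f v) = w s(u, v))
    (hx : ∀ u ∈ S, x' (f u) = x u) :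
    muG G' w' x' (S.image f) = muG G w x S := by
  suffices ∀ A ⊆ S, muG G' w' x' (A.image f) = muG G w x A from this S subset_rfl
  intro A hAS
  induction A using Finset.strongInduction with
  | H A ih =>
  rcases A.eq_empty_or_nonempty with rfl | ⟨i, hi⟩
  · simp [muG_empty]
  have herase : ∀ B ⊆ A, ∀ u ∈ B, (B.image f).erase (f u) = (B.erase u).image f :=
    fun B hB u hu => Finset.image_erase_of_injOn (hf.mono (hB.trans hAS)) hu
  have hnbr : ((A.erase i).image f).filter (G'.Adj (f i)) =
      ((A.erase i).filter (G.Adj i)).image f := by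
    rw [filter_image]
    exact congrArg _ (filter_congr fun j hj => hadj i (hAS hi) j (hAS (mem_of_mem_erase hj)))
  rw [muG_recurrence G' w' x' (mem_image_of_mem f hi), muG_recurrence G w x hi, hx i (hAS hi),
    herase A subset_rfl i hi, hnbr, ih _ (erase_ssubset hi) ((erase_subset i A).trans hAS),
    sum_image (hf.mono fun j hj => hAS (mem_of_mem_erase (mem_filter.1 hj).1))]
  refine congrArg _ (sum_congr rfl fun j hj => ?_)
  obtain ⟨hj, hij⟩ := mem_filter.1 hj
  rw [hw i (hAS hi) j (hAS (mem_of_mem_erase hj)) hij, herase _ (erase_subset i A) j hj,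
    ih _ ((erase_subset j _).trans_ssubset (erase_ssubset hi))
      ((erase_subset j _).trans ((erase_subset i A).trans hAS))]

section TreeOfPaths

variable {V : Type} {G : SimpleGraph V}

lemma SimpleGraph.Walk.snd_concat {u v w : V} {p : G.Walk u v} (hp : ¬p.Nil) (h : G.Adj v w) :
    (p.concat h).snd = p.snd := by
  cases p with
  | nil => exact absurd Walk.Nil.nil hp
  | cons h' q => rw [Walk.concat_cons, Walk.snd_cons, Walk.snd_cons]

lemma treeOfPaths_snd_eq_of_adj {i : V} {P Q : Σ v : V, G.Path i v}
    (h : (treeOfPaths G i).Adj P Q) (hP : ¬P.2.1.Nil) (hQ : ¬Q.2.1.Nil) :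
    P.2.1.snd = Q.2.1.snd := by
  rcases ((fromRel_adj _ _ _).1 h).2 with ⟨h, hQP⟩ | ⟨h, hPQ⟩
  · rw [hQP, Walk.snd_concat hP]
  · rw [hPQ, Walk.snd_concat hQ]

lemma ne_nil_path_of_not_nil {i : V} {P : Σ v : V, G.Path i v} (hP : ¬P.2.1.Nil) :
    P ≠ ⟨i, Path.nil⟩ := by
  rintro rfl
  exact hP Walk.Nil.nil

/-- Junk value `⟨i, Path.nil⟩` when `ij` is not an edge or the path already visits `i`. -/
noncomputable def consPath (i : V) {j : V} (Q : Σ v : V, G.Path j v) : Σ v : V, G.Path i v :=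
  if h : G.Adj i j ∧ i ∉ Q.2.1.support then
    ⟨Q.1, ⟨.cons h.1 Q.2.1, (Walk.cons_isPath_iff h.1 _).2 ⟨Q.2.2, h.2⟩⟩⟩
  else ⟨i, Path.nil⟩

section

variable {i j : V} (hij : G.Adj i j)
include hij

lemma consPath_eq {Q : Σ v : V, G.Path j v} (hQ : i ∉ Q.2.1.support) :
    consPath i Q = ⟨Q.1, ⟨.cons hij Q.2.1, (Walk.cons_isPath_iff hij _).2 ⟨Q.2.2, hQ⟩⟩⟩ :=
  dif_pos ⟨hij, hQ⟩

lemma consPath_fst {Q : Σ v : V, G.Path j v} (hQ : i ∉ Q.2.1.support) :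
    (consPath i Q).1 = Q.1 := by
  rw [consPath_eq hij hQ]

lemma not_nil_consPath {Q : Σ v : V, G.Path j v} (hQ : i ∉ Q.2.1.support) :
    ¬(consPath i Q).2.1.Nil ∧ (consPath i Q).2.1.snd = j := by
  rw [consPath_eq hij hQ]
  exact ⟨Walk.not_nil_cons, Walk.snd_cons _ _⟩

lemma consPath_injOn :
    Set.InjOn (consPath (G := G) i) {Q : Σ v : V, G.Path j v | i ∉ Q.2.1.support} := by
  rintro ⟨v, q, hq⟩ hQ ⟨v', q', hq'⟩ hQ' h
  rw [consPath_eq hij hQ, consPath_eq hij hQ'] at h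
  obtain ⟨rfl, h⟩ := Sigma.mk.inj_iff.1 h
  simp only [heq_eq_eq, Subtype.mk.injEq, Walk.cons.injEq, true_and] at h
  subst h
  rfl

lemma treeOfPaths_adj_consPath_iff {Q Q' : Σ v : V, G.Path j v}
    (hQ : i ∉ Q.2.1.support) (hQ' : i ∉ Q'.2.1.support) :
    (treeOfPaths G i).Adj (consPath i Q) (consPath i Q') ↔ (treeOfPaths G j).Adj Q Q' := by
  rw [treeOfPaths, treeOfPaths, fromRel_adj, fromRel_adj, (consPath_injOn hij).ne_iff hQ hQ',
    consPath_eq hij hQ, consPath_eq hij hQ']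
  simp [Walk.concat_cons]

end

lemma treeOfPaths_adj_nil_iff {i : V} {P : Σ v : V, G.Path i v} :
    (treeOfPaths G i).Adj ⟨i, Path.nil⟩ P ↔ G.Adj i P.1 ∧ P = consPath i ⟨P.1, Path.nil⟩ := by
  obtain ⟨v, p, hp⟩ := P
  rw [treeOfPaths, fromRel_adj]
  constructor
  · rintro ⟨-, ⟨h, hp'⟩ | ⟨h, hp'⟩⟩
    · dsimp only at h hp'
      subst hp'
      exact ⟨h, (consPath_eq (Q := ⟨v, Path.nil⟩) h (by simpa using h.ne)).symm⟩
    · exact absurd hp'.symm (Walk.concat_ne_nil _ h)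
  · rintro ⟨h, hP⟩
    rw [hP, consPath_eq h (by simpa using h.ne)]
    exact ⟨(ne_nil_path_of_not_nil Walk.not_nil_cons).symm, Or.inl ⟨h, rfl⟩⟩

end TreeOfPaths

lemma mul_prod_eq_of_recurrence {R ι : Type*} [CommRing R] [DecidableEq ι] (N : Finset ι)
    (y g : R) (a b c h : ι → R) (hab : ∀ j ∈ N, g * b j = a j * h j) :
    (y * g + ∑ j ∈ N, c j * h j) * ∏ j ∈ N, a j =
      (y * ∏ j ∈ N, a j + ∑ j ∈ N, c j * (b j * ∏ k ∈ N.erase j, a k)) * g := by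
  rw [add_mul, add_mul, sum_mul, sum_mul, mul_right_comm y]
  refine congrArg _ (sum_congr rfl fun j hj => ?_)
  rw [← mul_prod_erase N a hj]
  linear_combination -(c j * ∏ k ∈ N.erase j, a k) * hab j hj

section Godsil

variable {V : Type} [Fintype V] [DecidableEq V] (G : SimpleGraph V) [DecidableRel G.Adj]
  (w : Sym2 V → ℝ) (x : V → ℂ)

/-- The vertices of the tree of paths of `G[S]` rooted at `i`, seen inside `T^i_G`. -/
def pathsWithin (S : Finset V) (i : V) : Finset (Σ v : V, G.Path i v) :=
  univ.filter fun P => ∀ v ∈ P.2.1.support, v ∈ S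

noncomputable def muTree (i : V) (A : Finset (Σ v : V, G.Path i v)) : ℂ :=
  muG (treeOfPaths G i) (Sym2.lift ⟨fun P Q => w s(P.1, Q.1), fun P Q => by simp [Sym2.eq_swap]⟩)
    (fun P => x P.1) A

variable {G}

lemma pathsWithin_univ (i : V) : pathsWithin G univ i = univ :=
  filter_true_of_mem fun _ _ _ _ => mem_univ _

lemma nil_mem_pathsWithin {S : Finset V} {i : V} (hi : i ∈ S) :
    ⟨i, Path.nil⟩ ∈ pathsWithin G S i := by
  simpa [pathsWithin] using hi

lemma pathsWithin_erase_nil_eq_biUnion {S : Finset V} {i : V} (hi : i ∈ S) :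
    (pathsWithin G S i).erase ⟨i, Path.nil⟩ =
      ((S.erase i).filter (G.Adj i)).biUnion
        fun j => (pathsWithin G (S.erase i) j).image (consPath i) := by
  ext P
  simp only [mem_erase, pathsWithin, mem_filter, mem_univ, true_and, mem_biUnion, mem_image]
  constructor
  · rintro ⟨hne, hP⟩
    obtain ⟨v, p, hp⟩ := P
    cases p with
    | nil => exact absurd rfl hne
    | cons h q =>
      rw [Walk.cons_isPath_iff] at hp
      simp only [Walk.support_cons, List.mem_cons, forall_eq_or_imp] at hP
      refine ⟨_, ⟨⟨h.ne', hP.2 _ q.start_mem_support⟩, h⟩, ⟨v, q, hp.1⟩,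
        fun u hu => ⟨?_, hP.2 u hu⟩, consPath_eq h hp.2⟩
      rintro rfl
      exact hp.2 hu
  · rintro ⟨j, hj, Q, hQ, rfl⟩
    have hiQ : i ∉ Q.2.1.support := fun h => (hQ i h).1 rfl
    refine ⟨ne_nil_path_of_not_nil (not_nil_consPath hj.2 hiQ).1, ?_⟩
    rw [consPath_eq hj.2 hiQ]
    simp only [Walk.support_cons, List.mem_cons, forall_eq_or_imp]
    exact ⟨hi, fun v hv => (hQ v hv).2⟩

lemma muTree_biUnion {i : V} (t : Finset V) (B : V → Finset (Σ v : V, G.Path i v))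
    (hB : ∀ j ∈ t, ∀ P ∈ B j, ¬P.2.1.Nil ∧ P.2.1.snd = j) :
    muTree G w x i (t.biUnion B) = ∏ j ∈ t, muTree G w x i (B j) := by
  refine muG_biUnion _ _ _ t B (fun j hj k hk hjk => disjoint_left.2 fun P hPj hPk => ?_)
    fun j hj k hk hjk P hP Q hQ hPQ => hjk ?_
  · exact hjk ((hB j hj P hPj).2.symm.trans (hB k hk P hPk).2)
  · rw [← (hB j hj P hP).2, ← (hB k hk Q hQ).2]
    exact treeOfPaths_snd_eq_of_adj hPQ (hB j hj P hP).1 (hB k hk Q hQ).1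

lemma muTree_image_consPath {i j : V} (hij : G.Adj i j) {A : Finset (Σ v : V, G.Path j v)}
    (hA : ∀ Q ∈ A, i ∉ Q.2.1.support) :
    muTree G w x i (A.image (consPath i)) = muTree G w x j A := by
  refine muG_image ((consPath_injOn hij).mono hA)
    (fun P hP Q hQ => treeOfPaths_adj_consPath_iff hij (hA P hP) (hA Q hQ)) (fun P hP Q hQ _ => ?_)
    fun P hP => ?_
  · simp [consPath_eq hij (hA P hP), consPath_eq hij (hA Q hQ)]
  · simp [consPath_eq hij (hA P hP)]

lemma notMem_support_of_mem_pathsWithin {S : Finset V} {i j : V} {Q : Σ v : V, G.Path j v}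
    (hQ : Q ∈ pathsWithin G S j) (hi : i ∉ S) : i ∉ Q.2.1.support :=
  fun h => hi ((mem_filter.1 hQ).2 i h)

lemma not_nil_snd_of_mem_image_consPath {S : Finset V} {i j : V} (hij : G.Adj i j) (hi : i ∉ S)
    {P : Σ v : V, G.Path i v} (hP : P ∈ (pathsWithin G S j).image (consPath i)) :
    ¬P.2.1.Nil ∧ P.2.1.snd = j := by
  obtain ⟨Q, hQ, rfl⟩ := mem_image.1 hP
  exact not_nil_consPath hij (notMem_support_of_mem_pathsWithin hQ hi)

lemma filter_adj_nil_pathsWithin {S : Finset V} {i : V} (hi : i ∈ S) :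
    ((pathsWithin G S i).erase ⟨i, Path.nil⟩).filter ((treeOfPaths G i).Adj ⟨i, Path.nil⟩) =
      ((S.erase i).filter (G.Adj i)).image fun j => consPath i ⟨j, Path.nil⟩ := by
  ext P
  simp only [mem_filter, mem_erase, mem_image, treeOfPaths_adj_nil_iff, pathsWithin, mem_univ,
    true_and]
  constructor
  · rintro ⟨⟨-, hP⟩, h, hPeq⟩
    exact ⟨P.1, ⟨⟨h.ne', hP _ P.2.1.end_mem_support⟩, h⟩, hPeq.symm⟩
  · rintro ⟨j, ⟨⟨hji, hj⟩, h⟩, rfl⟩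
    have hi' : i ∉ (⟨j, Path.nil⟩ : Σ v : V, G.Path j v).2.1.support := by simpa using hji.symm
    refine ⟨⟨ne_nil_path_of_not_nil (not_nil_consPath h hi').1, ?_⟩, by rwa [consPath_fst h hi'], by
      rw [consPath_fst h hi']⟩
    rw [consPath_eq h hi']
    simp [hi, hj]

lemma muTree_pathsWithin_erase_nil {S : Finset V} {i : V} (hi : i ∈ S) :
    muTree G w x i ((pathsWithin G S i).erase ⟨i, Path.nil⟩) =
      ∏ j ∈ (S.erase i).filter (G.Adj i), muTree G w x j (pathsWithin G (S.erase i) j) := by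
  rw [pathsWithin_erase_nil_eq_biUnion hi,
    muTree_biUnion _ _ _ _ fun j hj P => not_nil_snd_of_mem_image_consPath (mem_filter.1 hj).2
      (notMem_erase i S)]
  exact prod_congr rfl fun j hj => muTree_image_consPath w x (mem_filter.1 hj).2
    fun Q hQ => notMem_support_of_mem_pathsWithin hQ (notMem_erase i S)

lemma muTree_pathsWithin_erase_nil_erase {S : Finset V} {i j : V} (hi : i ∈ S)
    (hj : j ∈ (S.erase i).filter (G.Adj i)) :
    muTree G w x i (((pathsWithin G S i).erase ⟨i, Path.nil⟩).erase (consPath i ⟨j, Path.nil⟩)) =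
      muTree G w x j ((pathsWithin G (S.erase i) j).erase ⟨j, Path.nil⟩) *
        ∏ k ∈ ((S.erase i).filter (G.Adj i)).erase j,
          muTree G w x k (pathsWithin G (S.erase i) k) := by
  have havoid : ∀ {k} (Q : Σ v : V, G.Path k v), Q ∈ pathsWithin G (S.erase i) k →
      i ∉ Q.2.1.support := fun Q hQ => notMem_support_of_mem_pathsWithin hQ (notMem_erase i S)
  have hij := (mem_filter.1 hj).2
  rw [pathsWithin_erase_nil_eq_biUnion hi, erase_biUnion,
    muTree_biUnion _ _ _ _ fun k hk P hP => not_nil_snd_of_mem_image_consPath (mem_filter.1 hk).2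
      (notMem_erase i S) (mem_of_mem_erase hP), ← mul_prod_erase _ _ hj]
  have hnil := nil_mem_pathsWithin (G := G) (mem_filter.1 hj).1
  congr 1
  · rw [Finset.image_erase_of_injOn ((consPath_injOn hij).mono havoid) hnil,
      muTree_image_consPath w x hij fun Q hQ => havoid Q (mem_of_mem_erase hQ)]
  · refine prod_congr rfl fun k hk => ?_
    obtain ⟨hkj, hk⟩ := mem_erase.1 hk
    have hjk : consPath i ⟨j, Path.nil⟩ ∉ (pathsWithin G (S.erase i) k).image (consPath i) :=
      fun h => hkj <| (not_nil_snd_of_mem_image_consPath (mem_filter.1 hk).2 (notMem_erase i S)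
        h).2.symm.trans (not_nil_consPath hij (havoid _ hnil)).2
    rw [erase_eq_of_notMem hjk, muTree_image_consPath w x (mem_filter.1 hk).2 havoid]

lemma muTree_pathsWithin {S : Finset V} {i : V} (hi : i ∈ S) :
    muTree G w x i (pathsWithin G S i) =
      x i * ∏ j ∈ (S.erase i).filter (G.Adj i), muTree G w x j (pathsWithin G (S.erase i) j) +
      ∑ j ∈ (S.erase i).filter (G.Adj i), (w s(i, j) : ℂ) *
        (muTree G w x j ((pathsWithin G (S.erase i) j).erase ⟨j, Path.nil⟩) *
          ∏ k ∈ ((S.erase i).filter (G.Adj i)).erase j,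
            muTree G w x k (pathsWithin G (S.erase i) k)) := by
  have hnil : ∀ {j}, G.Adj i j → i ∉ (⟨j, Path.nil⟩ : Σ v : V, G.Path j v).2.1.support :=
    fun h => by simpa using h.ne
  rw [← muTree_pathsWithin_erase_nil w x hi, muTree, muG_recurrence _ _ _ (nil_mem_pathsWithin hi),
    filter_adj_nil_pathsWithin hi, sum_image fun j hj k hk h => by
      simpa [consPath_fst (mem_filter.1 hj).2 (hnil (mem_filter.1 hj).2),
        consPath_fst (mem_filter.1 hk).2 (hnil (mem_filter.1 hk).2)] using congrArg Sigma.fst h]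
  refine congrArg _ (sum_congr rfl fun j hj => ?_)
  rw [← muTree_pathsWithin_erase_nil_erase w x hi hj]
  simp [muTree, consPath_fst (mem_filter.1 hj).2 (hnil (mem_filter.1 hj).2)]

theorem muG_mul_muTree_pathsWithin (S : Finset V) {i : V} (hi : i ∈ S) :
    muG G w x S * muTree G w x i ((pathsWithin G S i).erase ⟨i, Path.nil⟩) =
      muTree G w x i (pathsWithin G S i) * muG G w x (S.erase i) := by
  induction S using Finset.strongInduction generalizing i with
  | H S ih =>
  rw [muTree_pathsWithin w x hi, muG_recurrence G w x hi, muTree_pathsWithin_erase_nil w x hi]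
  exact mul_prod_eq_of_recurrence _ _ _ _ _ _ _
    fun j hj => ih _ (erase_ssubset hi) (mem_filter.1 hj).1

end Godsil

/-- **Godsil's identity.** Let `G` be a finite simple graph with positive edge
weights `w` and complex vertex variables `x`, rooted at `i`. Let `T = T^i_G` be
its rooted tree of paths, with root `r` the trivial path at `i`, where a path
`P` carries the vertex variable of its last vertex and the edge between a path
and its one-edge extension carries the weight of the appended edge. Then
`μ(G) · μ(T ∖ r) = μ(T) · μ(G ∖ i)`. -/
theorem godsil_identity {V : Type} [Fintype V] [DecidableEq V]
    (G : SimpleGraph V) [DecidableRel G.Adj]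
    (w : Sym2 V → ℝ)
    (x : V → ℂ) (i : V) :
    muG G w x Finset.univ *
      muG (treeOfPaths G i)
        (Sym2.lift ⟨fun P Q => w s(P.1, Q.1), fun P Q => by simp [Sym2.eq_swap]⟩)
        (fun P => x P.1)
        (Finset.univ \ {⟨i, SimpleGraph.Path.nil⟩}) =
    muG (treeOfPaths G i)
        (Sym2.lift ⟨fun P Q => w s(P.1, Q.1), fun P Q => by simp [Sym2.eq_swap]⟩)
        (fun P => x P.1)
        Finset.univ *
      muG G w x (Finset.univ \ {i}) := by
  have h := muG_mul_muTree_pathsWithin (G := G) w x Finset.univ (Finset.mem_univ i)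
  rw [pathsWithin_univ] at h
  rw [sdiff_singleton_eq_erase, sdiff_singleton_eq_erase]
  exact h
end
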